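/- Let $f\in C_c^2(\mathbb{R}_+\times\mathbb{R}^d)$ be real-valued and let $\mu$ be a $\sigma$-finite measure on $\mathbb{R}_+\times\mathbb{R}^d$ with $\int\|\xi\|^2\,\mu(d\xi)<\infty$. Then $\lim_{\theta\to\infty}\sup_{x=(x_1,x_2)\in\mathbb{R}_+\times\mathbb{R}^d} x_1\Big|\int\big(f(x+\theta^{-1}\xi)-f(x)-\theta^{-1}\langle f'(x),\xi\rangle-\tfrac{1}{2}\theta^{-2}\langle f''(x)\xi,\xi\rangle\big)\theta^2\,\mu(d\xi)\Big|=0$. -/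

import Mathlib

/-!
Write `R(x, h) = f(x + h) - f x - f'(x) h - ½ f''(x) h h`; the integrand is `R(x, ξ/θ) θ²`. It
suffices that `x₁ R(x, h)` is `o(‖h‖²)` as `h → 0` and `O(‖h‖²)` for all `h`, both uniformly in
`x`: the part of the integral with `‖ξ‖ ≤ δθ` is then at most `ε ∫ ‖ξ‖² dμ`, and the tail
`{‖ξ‖ > δθ}` vanishes as `θ → ∞` by dominated convergence.

Both bounds come from Taylor's formula along the segment `[x, x + h]` after moving the weight:
`x₁ = (x + t h)₁ - t h₁`, so `x₁ (f''(x + t h) - f''(x))` is controlled by the modulus of continuity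
of the bounded, uniformly continuous map `y ↦ y₁ f''(y)` plus `‖h‖ sup ‖f''‖`. For large `h` the
first-order version of the same estimate, with `y ↦ y₁ f'(y)`, gives the quadratic bound.
-/

open MeasureTheory Filter Topology Set

section OneVariable

variable {F : Type*} [NormedAddCommGroup F] [NormedSpace ℝ F]

theorem norm_sub_sub_smul_le_of_hasDerivAt {φ ψ : ℝ → F} {C : ℝ}
    (hφ : ∀ t ∈ Icc (0 : ℝ) 1, HasDerivAt φ (ψ t) t)
    (hψ : ∀ t ∈ Icc (0 : ℝ) 1, ‖ψ t - ψ 0‖ ≤ C) {s : ℝ} (hs : s ∈ Icc (0 : ℝ) 1) :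
    ‖φ s - φ 0 - s • ψ 0‖ ≤ C * s := by
  have hderiv : ∀ t ∈ Icc (0 : ℝ) s,
      HasDerivWithinAt (fun t => φ t - t • ψ 0) (ψ t - ψ 0) (Icc 0 s) t := fun t ht =>
    ((hφ t ⟨ht.1, ht.2.trans hs.2⟩).sub
      ((hasDerivAt_id t).smul_const (ψ 0)) |>.congr_deriv (by simp)).hasDerivWithinAt
  simpa [sub_right_comm] using norm_image_sub_le_of_norm_deriv_le_segment' hderiv
    (fun t ht => hψ t ⟨ht.1, ht.2.le.trans hs.2⟩) s (right_mem_Icc.2 hs.1)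

theorem norm_taylor_two_le_of_hasDerivAt {φ ψ χ : ℝ → F} {C : ℝ}
    (hφ : ∀ t ∈ Icc (0 : ℝ) 1, HasDerivAt φ (ψ t) t)
    (hψ : ∀ t ∈ Icc (0 : ℝ) 1, HasDerivAt ψ (χ t) t)
    (hχ : ∀ t ∈ Icc (0 : ℝ) 1, ‖χ t - χ 0‖ ≤ C) :
    ‖φ 1 - φ 0 - ψ 0 - (1 / 2 : ℝ) • χ 0‖ ≤ C := by
  have hC : 0 ≤ C := (norm_nonneg _).trans (hχ 0 (left_mem_Icc.2 zero_le_one))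
  have hu : ∀ t ∈ Icc (0 : ℝ) 1, HasDerivAt (fun t => φ t - (t ^ 2 / 2) • χ 0)
      (ψ t - t • χ 0) t := fun t ht =>
    (hφ t ht).sub (((hasDerivAt_pow 2 t).div_const 2).smul_const (χ 0)) |>.congr_deriv
      (by simp)
  have hv : ∀ t ∈ Icc (0 : ℝ) 1, ‖(ψ t - t • χ 0) - (ψ 0 - (0 : ℝ) • χ 0)‖ ≤ C := by
    intro t ht
    simpa [sub_right_comm] using
      (norm_sub_sub_smul_le_of_hasDerivAt hψ hχ ht).trans (mul_le_of_le_one_right hC ht.2)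
  convert norm_sub_sub_smul_le_of_hasDerivAt hu hv (right_mem_Icc.2 zero_le_one) using 2
  · simp only [one_smul, zero_smul, sub_zero]
    module
  · rw [mul_one]

end OneVariable

section Weighted

variable {E : Type*} [NormedAddCommGroup E] [NormedSpace ℝ E]

noncomputable def secondOrderRemainder (f : E → ℝ) (x h : E) : ℝ :=
  f (x + h) - f x - fderiv ℝ f x h - 1 / 2 * fderiv ℝ (fderiv ℝ f) x h h

theorem hasDerivAt_comp_add_smul {G : Type*} [NormedAddCommGroup G] [NormedSpace ℝ G]
    {g : E → G} {x h : E} {t : ℝ} (hg : DifferentiableAt ℝ g (x + t • h)) :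
    HasDerivAt (fun s : ℝ => g (x + s • h)) (fderiv ℝ g (x + t • h) h) t :=
  hg.hasFDerivAt.comp_hasDerivAt t <| by
    simpa using ((hasDerivAt_id t).smul_const h).const_add x

theorem norm_smul_sub_le_of_norm_weighted_sub_le {W : Type*} [NormedAddCommGroup W]
    [NormedSpace ℝ W] (ℓ : E →L[ℝ] ℝ) {F : E → W} {x h : E} {t C M : ℝ} (ht : t ∈ Icc (0 : ℝ) 1)
    (hC : ‖ℓ (x + t • h) • F (x + t • h) - ℓ x • F x‖ ≤ C) (hM : ‖F (x + t • h)‖ ≤ M) :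
    ‖ℓ x • (F (x + t • h) - F x)‖ ≤ C + ‖ℓ‖ * ‖h‖ * M := by
  have hshift : ℓ x • (F (x + t • h) - F x)
      = (ℓ (x + t • h) • F (x + t • h) - ℓ x • F x) - (t * ℓ h) • F (x + t • h) := by
    simp only [map_add, map_smul, smul_eq_mul]
    module
  rw [hshift]
  refine (norm_sub_le _ _).trans (add_le_add hC ?_)
  rw [norm_smul, norm_mul, Real.norm_eq_abs]
  calc |t| * ‖ℓ h‖ * ‖F (x + t • h)‖ ≤ 1 * (‖ℓ‖ * ‖h‖) * M := by
        gcongr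
        exacts [abs_le.2 ⟨by linarith [ht.1], ht.2⟩, ℓ.le_opNorm h]
    _ = ‖ℓ‖ * ‖h‖ * M := by rw [one_mul]

theorem abs_mul_sub_sub_fderiv_le {f : E → ℝ} (hf : Differentiable ℝ f) (ℓ : E →L[ℝ] ℝ)
    {x h : E} {C M : ℝ} (hM : ∀ y, ‖fderiv ℝ f y‖ ≤ M)
    (hC : ∀ t ∈ Icc (0 : ℝ) 1,
      ‖ℓ (x + t • h) • fderiv ℝ f (x + t • h) - ℓ x • fderiv ℝ f x‖ ≤ C) :
    |ℓ x * (f (x + h) - f x - fderiv ℝ f x h)| ≤ (C + ‖ℓ‖ * ‖h‖ * M) * ‖h‖ := by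
  have hψ : ∀ t ∈ Icc (0 : ℝ) 1,
      ‖ℓ x * fderiv ℝ f (x + t • h) h - ℓ x * fderiv ℝ f (x + (0 : ℝ) • h) h‖
        ≤ (C + ‖ℓ‖ * ‖h‖ * M) * ‖h‖ := by
    intro t ht
    have heq : ℓ x * fderiv ℝ f (x + t • h) h - ℓ x * fderiv ℝ f (x + (0 : ℝ) • h) h
        = (ℓ x • (fderiv ℝ f (x + t • h) - fderiv ℝ f x)) h := by
      simp [mul_sub]
    have hw := norm_smul_sub_le_of_norm_weighted_sub_le ℓ ht (hC t ht) (hM _)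
    rw [heq]
    exact (ContinuousLinearMap.le_opNorm _ h).trans (mul_le_mul_of_nonneg_right hw (norm_nonneg h))
  simpa [mul_sub] using norm_sub_sub_smul_le_of_hasDerivAt
    (fun t _ => (hasDerivAt_comp_add_smul (hf _)).const_mul (ℓ x)) hψ (right_mem_Icc.2 zero_le_one)

theorem abs_mul_secondOrderRemainder_le {f : E → ℝ} (hf : ContDiff ℝ 2 f) (ℓ : E →L[ℝ] ℝ)
    {x h : E} {C M : ℝ} (hM : ∀ y, ‖fderiv ℝ (fderiv ℝ f) y‖ ≤ M)
    (hC : ∀ t ∈ Icc (0 : ℝ) 1, ‖ℓ (x + t • h) • fderiv ℝ (fderiv ℝ f) (x + t • h)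
      - ℓ x • fderiv ℝ (fderiv ℝ f) x‖ ≤ C) :
    |ℓ x * secondOrderRemainder f x h| ≤ (C + ‖ℓ‖ * ‖h‖ * M) * ‖h‖ ^ 2 := by
  have hf₁ : Differentiable ℝ f := hf.differentiable (by norm_num)
  have hf₂ : Differentiable ℝ (fderiv ℝ f) :=
    (hf.fderiv_right (m := 1) (by norm_num)).differentiable one_ne_zero
  have hψ (t : ℝ) : HasDerivAt (fun s : ℝ => ℓ x * fderiv ℝ f (x + s • h) h)
      (ℓ x * fderiv ℝ (fderiv ℝ f) (x + t • h) h h) t :=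
    ((ContinuousLinearMap.apply ℝ ℝ h).hasFDerivAt.comp_hasDerivAt t
      (hasDerivAt_comp_add_smul (hf₂ _))).const_mul (ℓ x)
  have hχ : ∀ t ∈ Icc (0 : ℝ) 1, ‖ℓ x * fderiv ℝ (fderiv ℝ f) (x + t • h) h h
      - ℓ x * fderiv ℝ (fderiv ℝ f) (x + (0 : ℝ) • h) h h‖ ≤ (C + ‖ℓ‖ * ‖h‖ * M) * ‖h‖ ^ 2 := by
    intro t ht
    have heq : ℓ x * fderiv ℝ (fderiv ℝ f) (x + t • h) h h
        - ℓ x * fderiv ℝ (fderiv ℝ f) (x + (0 : ℝ) • h) h h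
        = (ℓ x • (fderiv ℝ (fderiv ℝ f) (x + t • h) - fderiv ℝ (fderiv ℝ f) x)) h h := by
      simp [mul_sub]
    have hw := norm_smul_sub_le_of_norm_weighted_sub_le ℓ (F := fderiv ℝ (fderiv ℝ f))
      ht (hC t ht) (hM _)
    rw [heq, sq, ← mul_assoc]
    exact (ContinuousLinearMap.le_opNorm₂ _ h h).trans (by gcongr)
  simpa [secondOrderRemainder, mul_sub, mul_left_comm] using norm_taylor_two_le_of_hasDerivAt
    (fun t _ => (hasDerivAt_comp_add_smul (hf₁ _)).const_mul (ℓ x)) (fun t _ => hψ t) hχ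

end Weighted

section CompactSupport

variable {E W : Type*} [NormedAddCommGroup E] [NormedSpace ℝ E] [NormedAddCommGroup W]
  [NormedSpace ℝ W] {F : E → W} (hF : ContDiff ℝ 1 F) (hFc : HasCompactSupport F)
  (ℓ : E →L[ℝ] ℝ)
include hF hFc

theorem HasCompactSupport.exists_norm_fderiv_le : ∃ M, ∀ y, ‖fderiv ℝ F y‖ ≤ M :=
  (hFc.fderiv ℝ).exists_bound_of_continuous (hF.continuous_fderiv one_ne_zero)

theorem HasCompactSupport.exists_norm_smul_fderiv_le : ∃ A, ∀ y, ‖ℓ y • fderiv ℝ F y‖ ≤ A :=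
  ((hFc.fderiv ℝ).smul_left (f := ℓ)).exists_bound_of_continuous
    (ℓ.continuous.smul (hF.continuous_fderiv one_ne_zero))

theorem HasCompactSupport.exists_norm_smul_fderiv_sub_lt :
    ∀ ε > 0, ∃ δ > 0, ∀ x y : E, ‖y - x‖ < δ →
      ‖ℓ y • fderiv ℝ F y - ℓ x • fderiv ℝ F x‖ < ε := by
  intro ε hε
  obtain ⟨δ, hδ, h⟩ := Metric.uniformContinuous_iff.1
    (((hFc.fderiv ℝ).smul_left (f := ℓ)).uniformContinuous_of_continuous
      (ℓ.continuous.smul (hF.continuous_fderiv one_ne_zero))) ε hε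
  exact ⟨δ, hδ, fun x y hxy => by simpa [dist_eq_norm] using h (dist_eq_norm y x ▸ hxy)⟩

end CompactSupport

section SecondOrder

variable {E : Type*} [NormedAddCommGroup E] [NormedSpace ℝ E]
  {f : E → ℝ} (hf : ContDiff ℝ 2 f) (hfc : HasCompactSupport f) (ℓ : E →L[ℝ] ℝ)
include hf hfc

theorem exists_abs_mul_secondOrderRemainder_le_of_norm_le :
    ∀ ε > 0, ∃ δ > 0, ∀ x h : E, ‖h‖ ≤ δ →
      |ℓ x * secondOrderRemainder f x h| ≤ ε * ‖h‖ ^ 2 := by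
  intro ε hε
  have hf₁ : ContDiff ℝ 1 (fderiv ℝ f) := hf.fderiv_right (m := 1) (by norm_num)
  obtain ⟨M, hM⟩ := (hfc.fderiv ℝ).exists_norm_fderiv_le hf₁
  have hM0 : 0 ≤ M := (norm_nonneg _).trans (hM 0)
  obtain ⟨δ₀, hδ₀, hg⟩ :=
    (hfc.fderiv ℝ).exists_norm_smul_fderiv_sub_lt hf₁ ℓ (ε / 2) (by positivity)
  refine ⟨min (δ₀ / 2) (ε / (2 * (‖ℓ‖ * M + 1))), by positivity, fun x h hh => ?_⟩
  have hC : ∀ t ∈ Icc (0 : ℝ) 1, ‖ℓ (x + t • h) • fderiv ℝ (fderiv ℝ f) (x + t • h)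
      - ℓ x • fderiv ℝ (fderiv ℝ f) x‖ ≤ ε / 2 := by
    intro t ht
    refine (hg _ _ ?_).le
    rw [add_sub_cancel_left, norm_smul, Real.norm_of_nonneg ht.1]
    calc t * ‖h‖ ≤ ‖h‖ := mul_le_of_le_one_left (norm_nonneg h) ht.2
      _ ≤ δ₀ / 2 := hh.trans (min_le_left _ _)
      _ < δ₀ := half_lt_self hδ₀
  have hlin : ‖ℓ‖ * ‖h‖ * M ≤ ε / 2 :=
    calc ‖ℓ‖ * ‖h‖ * M = (‖ℓ‖ * M) * ‖h‖ := by ring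
      _ ≤ (‖ℓ‖ * M + 1) * (ε / (2 * (‖ℓ‖ * M + 1))) := by
        gcongr
        exacts [le_add_of_nonneg_right zero_le_one, hh.trans (min_le_right _ _)]
      _ = ε / 2 := by field_simp
  calc |ℓ x * secondOrderRemainder f x h| ≤ (ε / 2 + ‖ℓ‖ * ‖h‖ * M) * ‖h‖ ^ 2 :=
        abs_mul_secondOrderRemainder_le hf ℓ hM hC
    _ ≤ ε * ‖h‖ ^ 2 := by gcongr; linarith

theorem exists_abs_mul_secondOrderRemainder_le :
    ∃ C, ∀ x h : E, |ℓ x * secondOrderRemainder f x h| ≤ C * ‖h‖ ^ 2 := by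
  have hf₁ : ContDiff ℝ 1 (fderiv ℝ f) := hf.fderiv_right (m := 1) (by norm_num)
  obtain ⟨M₁, hM₁⟩ := hfc.exists_norm_fderiv_le (hf.of_le (by norm_num))
  obtain ⟨A₁, hA₁⟩ := hfc.exists_norm_smul_fderiv_le (hf.of_le (by norm_num)) ℓ
  obtain ⟨M₂, hM₂⟩ := (hfc.fderiv ℝ).exists_norm_fderiv_le hf₁
  obtain ⟨A₂, hA₂⟩ := (hfc.fderiv ℝ).exists_norm_smul_fderiv_le hf₁ ℓ
  have hM₁0 : 0 ≤ M₁ := (norm_nonneg _).trans (hM₁ 0)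
  have hM₂0 : 0 ≤ M₂ := (norm_nonneg _).trans (hM₂ 0)
  have hA₁0 : 0 ≤ A₁ := (norm_nonneg _).trans (hA₁ 0)
  have hA₂0 : 0 ≤ A₂ := (norm_nonneg _).trans (hA₂ 0)
  have hℓ0 : 0 ≤ ‖ℓ‖ := norm_nonneg ℓ
  refine ⟨2 * A₁ + 3 * A₂ + ‖ℓ‖ * (M₁ + M₂), fun x h => ?_⟩
  rcases le_total ‖h‖ 1 with hh | hh
  · calc |ℓ x * secondOrderRemainder f x h| ≤ (A₂ + A₂ + ‖ℓ‖ * ‖h‖ * M₂) * ‖h‖ ^ 2 :=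
          abs_mul_secondOrderRemainder_le hf ℓ hM₂ fun t _ => norm_sub_le_of_le (hA₂ _) (hA₂ x)
      _ ≤ _ := mul_le_mul_of_nonneg_right
          (by nlinarith [mul_le_mul_of_nonneg_left hh (mul_nonneg hℓ0 hM₂0)]) (sq_nonneg _)
  · have hfirst : |ℓ x * (f (x + h) - f x - fderiv ℝ f x h)| ≤ (A₁ + A₁ + ‖ℓ‖ * ‖h‖ * M₁) * ‖h‖ :=
      abs_mul_sub_sub_fderiv_le (hf.differentiable (by norm_num)) ℓ hM₁
        fun t _ => norm_sub_le_of_le (hA₁ _) (hA₁ x)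
    have hsecond : |ℓ x * fderiv ℝ (fderiv ℝ f) x h h| ≤ A₂ * ‖h‖ ^ 2 := by
      have heq : ℓ x * fderiv ℝ (fderiv ℝ f) x h h = (ℓ x • fderiv ℝ (fderiv ℝ f) x) h h := by
        simp
      rw [heq, ← Real.norm_eq_abs, sq, ← mul_assoc]
      exact (ContinuousLinearMap.le_opNorm₂ _ h h).trans (by gcongr; exact hA₂ x)
    have hsplit : ℓ x * secondOrderRemainder f x h = ℓ x * (f (x + h) - f x - fderiv ℝ f x h)
        - 1 / 2 * (ℓ x * fderiv ℝ (fderiv ℝ f) x h h) := by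
      rw [secondOrderRemainder]; ring
    have hh2 : ‖h‖ ≤ ‖h‖ ^ 2 := by nlinarith
    calc |ℓ x * secondOrderRemainder f x h|
        ≤ |ℓ x * (f (x + h) - f x - fderiv ℝ f x h)|
          + 1 / 2 * |ℓ x * fderiv ℝ (fderiv ℝ f) x h h| := by
          rw [hsplit]
          refine (abs_sub _ _).trans_eq ?_
          rw [abs_mul (1 / 2 : ℝ), abs_of_pos (by norm_num : (0 : ℝ) < 1 / 2)]
      _ ≤ (A₁ + A₁ + ‖ℓ‖ * ‖h‖ * M₁) * ‖h‖ + 1 / 2 * (A₂ * ‖h‖ ^ 2) := by gcongr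
      _ ≤ _ := by
          nlinarith [mul_le_mul_of_nonneg_left hh2 hA₁0,
            mul_nonneg (mul_nonneg hℓ0 hM₂0) (sq_nonneg ‖h‖), mul_nonneg hA₂0 (sq_nonneg ‖h‖)]

end SecondOrder

section Rescaling

variable {E : Type*} [NormedAddCommGroup E]

theorem tendsto_integral_indicator_lt_norm [MeasurableSpace E] [OpensMeasurableSpace E]
    {μ : Measure E} {g : E → ℝ} (hg : Integrable g μ) :
    Tendsto (fun r : ℝ => ∫ ξ, {ξ | r < ‖ξ‖}.indicator g ξ ∂μ) atTop (𝓝 0) := by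
  simpa using tendsto_integral_filter_of_dominated_convergence (μ := μ) (f := fun _ => 0)
    (fun ξ => ‖g ξ‖)
    (.of_forall fun r =>
      (hg.indicator (measurableSet_lt measurable_const measurable_norm)).aestronglyMeasurable)
    (.of_forall fun r => .of_forall fun ξ => norm_indicator_le_norm_self _ _) hg.norm
    (.of_forall fun ξ => tendsto_const_nhds.congr' <| (eventually_ge_atTop ‖ξ‖).mono
      fun r hr => (indicator_of_notMem (s := {ξ : E | r < ‖ξ‖}) (not_lt.2 hr) _).symm)

variable [NormedSpace ℝ E]

theorem abs_rescaled_mul_sq_le {Φ : E → ℝ} {η δ C θ : ℝ} (hη : 0 ≤ η) (hθ : 0 < θ)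
    (hsmall : ∀ h, ‖h‖ ≤ δ → |Φ h| ≤ η * ‖h‖ ^ 2) (hquad : ∀ h, |Φ h| ≤ C * ‖h‖ ^ 2) (ξ : E) :
    |Φ (θ⁻¹ • ξ) * θ ^ 2|
      ≤ η * ‖ξ‖ ^ 2 + C * {ξ : E | δ * θ < ‖ξ‖}.indicator (fun ξ => ‖ξ‖ ^ 2) ξ := by
  have hnorm : ‖θ⁻¹ • ξ‖ = θ⁻¹ * ‖ξ‖ := by
    rw [norm_smul, norm_inv, Real.norm_of_nonneg hθ.le]
  have hscale (c : ℝ) : c * ‖θ⁻¹ • ξ‖ ^ 2 * θ ^ 2 = c * ‖ξ‖ ^ 2 := by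
    rw [hnorm]; field_simp
  rw [abs_mul, abs_of_pos (pow_pos hθ 2)]
  by_cases hξ : ‖ξ‖ ≤ δ * θ
  · rw [indicator_of_notMem (s := {ξ : E | δ * θ < ‖ξ‖}) (not_lt.2 hξ), mul_zero, add_zero,
      ← hscale]
    gcongr
    refine hsmall _ ?_
    rw [hnorm, inv_mul_le_iff₀ hθ, mul_comm]
    exact hξ
  · rw [indicator_of_mem (s := {ξ : E | δ * θ < ‖ξ‖}) (not_le.1 hξ), ← hscale C]
    calc |Φ (θ⁻¹ • ξ)| * θ ^ 2 ≤ C * ‖θ⁻¹ • ξ‖ ^ 2 * θ ^ 2 := by gcongr; exact hquad _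
      _ ≤ η * ‖ξ‖ ^ 2 + C * ‖θ⁻¹ • ξ‖ ^ 2 * θ ^ 2 := le_add_of_nonneg_left (by positivity)

theorem tendsto_iSup_abs_integral_rescaled [MeasurableSpace E] [OpensMeasurableSpace E]
    {μ : Measure E} {ι : Type*} (hint : Integrable (fun ξ => ‖ξ‖ ^ 2) μ) (Φ : ι → E → ℝ)
    (hsmall : ∀ ε > 0, ∃ δ > 0, ∀ i h, ‖h‖ ≤ δ → |Φ i h| ≤ ε * ‖h‖ ^ 2)
    (hquad : ∃ C, ∀ i h, |Φ i h| ≤ C * ‖h‖ ^ 2) :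
    Tendsto (fun θ : ℝ => ⨆ i, |∫ ξ, Φ i (θ⁻¹ • ξ) * θ ^ 2 ∂μ|) atTop (𝓝 0) := by
  obtain ⟨C, hC⟩ := hquad
  replace hC (i : ι) (h : E) : |Φ i h| ≤ max C 0 * ‖h‖ ^ 2 :=
    (hC i h).trans (by gcongr; exact le_max_left _ _)
  set I := ∫ ξ, ‖ξ‖ ^ 2 ∂μ
  have hI : 0 ≤ I := integral_nonneg fun _ => by positivity
  refine tendsto_order.2 ⟨fun a ha => .of_forall fun θ =>
    ha.trans_le (Real.iSup_nonneg fun i => abs_nonneg _), fun ε hε => ?_⟩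
  set η := ε / (I + 1)
  have hη : 0 < η := by positivity
  have hηI : η * I < ε := by
    rw [div_mul_eq_mul_div, div_lt_iff₀ (by positivity)]
    nlinarith
  obtain ⟨δ, hδ, hδη⟩ := hsmall η hη
  have hmeas (r : ℝ) : MeasurableSet {ξ : E | r < ‖ξ‖} :=
    measurableSet_lt measurable_const measurable_norm
  set T := fun r : ℝ => ∫ ξ, {ξ : E | r < ‖ξ‖}.indicator (fun ξ => ‖ξ‖ ^ 2) ξ ∂μ
  have hT : Tendsto (fun θ => η * I + max C 0 * T (δ * θ)) atTop (𝓝 (η * I)) := by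
    simpa using tendsto_const_nhds.add
      (((tendsto_integral_indicator_lt_norm hint).comp
        (tendsto_id.const_mul_atTop hδ)).const_mul (max C 0))
  filter_upwards [hT.eventually (gt_mem_nhds hηI), eventually_gt_atTop 0] with θ hθε hθ
  have htail : Integrable (fun ξ => max C 0 *
      {ξ : E | δ * θ < ‖ξ‖}.indicator (fun ξ => ‖ξ‖ ^ 2) ξ) μ :=
    (hint.indicator (hmeas _)).const_mul _
  have hbound : Integrable (fun ξ => η * ‖ξ‖ ^ 2 + max C 0 *
      {ξ : E | δ * θ < ‖ξ‖}.indicator (fun ξ => ‖ξ‖ ^ 2) ξ) μ :=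
    (hint.const_mul η).add htail
  refine lt_of_le_of_lt (Real.iSup_le (fun i => ?_) ?_) hθε
  · calc |∫ ξ, Φ i (θ⁻¹ • ξ) * θ ^ 2 ∂μ|
        ≤ ∫ ξ, (η * ‖ξ‖ ^ 2 + max C 0 * {ξ : E | δ * θ < ‖ξ‖}.indicator (fun ξ => ‖ξ‖ ^ 2) ξ) ∂μ :=
          (Real.norm_eq_abs _).symm.trans_le <| norm_integral_le_of_norm_le hbound
            (.of_forall (abs_rescaled_mul_sq_le hη.le hθ (hδη i) (hC i)))
      _ = η * I + max C 0 * T (δ * θ) := by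
          rw [integral_add (hint.const_mul η) htail, integral_const_mul, integral_const_mul]
  · exact add_nonneg (mul_nonneg hη.le hI) (mul_nonneg (le_max_right _ _)
      (integral_nonneg fun _ => indicator_nonneg (fun _ _ => by positivity) _))

end Rescaling

theorem uniform_limit_second_order_general
    {d : ℕ} (μ : Measure (ℝ × EuclideanSpace ℝ (Fin d)))
    (hint : Integrable (fun ξ : ℝ × EuclideanSpace ℝ (Fin d) => ‖ξ‖ ^ 2) μ)
    (f : (ℝ × EuclideanSpace ℝ (Fin d)) → ℝ)
    (hf : ContDiff ℝ 2 f) (hfc : HasCompactSupport f) :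
    Tendsto
      (fun θ : ℝ =>
        ⨆ x : {x : ℝ × EuclideanSpace ℝ (Fin d) // 0 ≤ x.1},
          (x : ℝ × EuclideanSpace ℝ (Fin d)).1 *
          |∫ ξ, (f ((x : ℝ × EuclideanSpace ℝ (Fin d)) + θ⁻¹ • ξ)
              - f (x : ℝ × EuclideanSpace ℝ (Fin d))
              - θ⁻¹ * fderiv ℝ f (x : ℝ × EuclideanSpace ℝ (Fin d)) ξ
              - (1 / 2) * θ⁻¹ ^ 2 *
                  fderiv ℝ (fderiv ℝ f) (x : ℝ × EuclideanSpace ℝ (Fin d)) ξ ξ)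
            * θ ^ 2 ∂μ|)
      atTop (𝓝 0) := by
  set ℓ := ContinuousLinearMap.fst ℝ ℝ (EuclideanSpace ℝ (Fin d))
  have key := tendsto_iSup_abs_integral_rescaled hint
    (fun (x : {x : ℝ × EuclideanSpace ℝ (Fin d) // 0 ≤ x.1}) h => ℓ x * secondOrderRemainder f x h)
    (fun ε hε => (exists_abs_mul_secondOrderRemainder_le_of_norm_le hf hfc ℓ ε hε).imp
      fun _ ⟨hδ, h⟩ => ⟨hδ, fun x => h x⟩)
    ((exists_abs_mul_secondOrderRemainder_le hf hfc ℓ).imp fun _ h x => h x)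
  refine key.congr fun θ => iSup_congr fun x => ?_
  have hrem (ξ : ℝ × EuclideanSpace ℝ (Fin d)) :
      ℓ x * secondOrderRemainder f x (θ⁻¹ • ξ) * θ ^ 2
        = (x : ℝ × EuclideanSpace ℝ (Fin d)).1 *
          ((f ((x : ℝ × EuclideanSpace ℝ (Fin d)) + θ⁻¹ • ξ)
              - f (x : ℝ × EuclideanSpace ℝ (Fin d))
              - θ⁻¹ * fderiv ℝ f (x : ℝ × EuclideanSpace ℝ (Fin d)) ξ
              - (1 / 2) * θ⁻¹ ^ 2 *
                  fderiv ℝ (fderiv ℝ f) (x : ℝ × EuclideanSpace ℝ (Fin d)) ξ ξ) * θ ^ 2) := by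
    simp only [secondOrderRemainder, ℓ, ContinuousLinearMap.coe_fst', map_smul, smul_eq_mul,
      smul_apply]
    ring
  simp_rw [hrem, integral_const_mul, abs_mul, abs_of_nonneg x.2]

/-- For real-valued `f ∈ C²_c(ℝ₊ × ℝᵈ)` and a σ-finite measure `μ`
on ℝ₊ × ℝᵈ with `∫ ‖ξ‖² dμ < ∞`,
`sup_{x=(x₁,x₂) ∈ ℝ₊×ℝᵈ} x₁ |∫ (f(x+θ⁻¹ξ) - f(x) - θ⁻¹⟨f'(x), ξ⟩
  - ½ θ⁻² ⟨f''(x) ξ, ξ⟩) θ² dμ(ξ)| → 0` as `θ → ∞`. -/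
theorem uniform_limit_second_order
    {d : ℕ} (μ : Measure (ℝ × EuclideanSpace ℝ (Fin d))) [SigmaFinite μ]
    (hsupp : ∀ᵐ ξ ∂μ, 0 ≤ ξ.1)
    (hint : Integrable (fun ξ : ℝ × EuclideanSpace ℝ (Fin d) => ‖ξ‖ ^ 2) μ)
    (f : (ℝ × EuclideanSpace ℝ (Fin d)) → ℝ)
    (hf : ContDiff ℝ 2 f) (hfc : HasCompactSupport f) :
    Tendsto
      (fun θ : ℝ =>
        ⨆ x : {x : ℝ × EuclideanSpace ℝ (Fin d) // 0 ≤ x.1},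
          (x : ℝ × EuclideanSpace ℝ (Fin d)).1 *
          |∫ ξ, (f ((x : ℝ × EuclideanSpace ℝ (Fin d)) + θ⁻¹ • ξ)
              - f (x : ℝ × EuclideanSpace ℝ (Fin d))
              - θ⁻¹ * fderiv ℝ f (x : ℝ × EuclideanSpace ℝ (Fin d)) ξ
              - (1 / 2) * θ⁻¹ ^ 2 *
                  fderiv ℝ (fderiv ℝ f) (x : ℝ × EuclideanSpace ℝ (Fin d)) ξ ξ)
            * θ ^ 2 ∂μ|)
      atTop (𝓝 0) :=
  uniform_limit_second_order_general μ hint f hf hfc
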